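/- arXiv:1806.06655 — 2 statements merged into one kernel-verified Lean document; each statement's English description precedes it below -/
import Mathlib

section
/- Let M : ℝⁿ → (n×n symmetric positive definite matrices) be a smooth metric, f ∈ C²(ℝⁿ×ℝ, ℝ), and h(x,t) = -M(x)⁻¹ ∂f/∂x(x,t) the natural gradient vector field. Then in coordinates, M (∂h/∂x) + (∂h/∂x)ᵀ M + Ṁ = -2H, where Ṁ = Σᵢ (∂M/∂xᵢ) hᵢ and H is the Riemannian Hessian of f with entries H_{ij} = ∂²f/∂xᵢ∂xⱼ - Γᵏ_{ij} ∂f/∂xₖ, with Γ the Christoffel symbols of the Levi-Civita connection of M. -/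
open Matrix

/-- Partial derivative ∂f/∂xᵢ in coordinates. -/
noncomputable def pd {ι : Type*} [Fintype ι] [DecidableEq ι]
    (f : (ι → ℝ) → ℝ) (i : ι) (x : ι → ℝ) : ℝ :=
  fderiv ℝ f x (Pi.single i 1)

/-- Christoffel symbols of the second kind Γᵐ_{ij} of the metric M. -/
noncomputable def christoffel {ι : Type*} [Fintype ι] [DecidableEq ι]
    (M : (ι → ℝ) → Matrix ι ι ℝ) (m i j : ι) (x : ι → ℝ) : ℝ :=
  (1 / 2) * ∑ k, (M x)⁻¹ m k *
    (pd (fun y => M y i k) j x + pd (fun y => M y j k) i x - pd (fun y => M y i j) k x)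

/-- Riemannian Hessian: H_{ij} = ∂²f/∂xᵢ∂xⱼ - Γᵏ_{ij} ∂f/∂xₖ. -/
noncomputable def riemHess {ι : Type*} [Fintype ι] [DecidableEq ι]
    (M : (ι → ℝ) → Matrix ι ι ℝ) (f : (ι → ℝ) → ℝ) (x : ι → ℝ) : Matrix ι ι ℝ :=
  Matrix.of fun i j =>
    pd (fun y => pd f j y) i x - ∑ k, christoffel M k i j x * pd f k x

/-- Natural gradient vector field h(x,t) = -M(x)⁻¹ ∂f/∂x(x,t). -/
noncomputable def natGrad {n : ℕ} (M : (Fin n → ℝ) → Matrix (Fin n) (Fin n) ℝ)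
    (f : (Fin n → ℝ) → ℝ → ℝ) (x : Fin n → ℝ) (t : ℝ) : Fin n → ℝ :=
  -((M x)⁻¹.mulVec fun i => pd (fun y => f y t) i x)

/-- Jacobian ∂h/∂x of a (time-dependent) vector field. -/
noncomputable def jacobian {n : ℕ} (h : (Fin n → ℝ) → ℝ → Fin n → ℝ)
    (x : Fin n → ℝ) (t : ℝ) : Matrix (Fin n) (Fin n) ℝ :=
  Matrix.of fun i j => pd (fun y => h y t i) j x

/-- Ṁ = Σᵢ (∂M/∂xᵢ) hᵢ along the vector field h. -/
noncomputable def mDot {n : ℕ} (M : (Fin n → ℝ) → Matrix (Fin n) (Fin n) ℝ)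
    (h : (Fin n → ℝ) → ℝ → Fin n → ℝ) (x : Fin n → ℝ) (t : ℝ) :
    Matrix (Fin n) (Fin n) ℝ :=
  Matrix.of fun i j => ∑ k, pd (fun y => M y i j) k x * h x t k

section aux
variable {ι : Type*} [Fintype ι] [DecidableEq ι]
set_option linter.unusedSectionVars false

lemma pd_neg (c : (ι → ℝ) → ℝ) (j : ι) (x : ι → ℝ) :
    pd (fun y => -(c y)) j x = -(pd c j x) := by
  simp [pd, fderiv_neg]

lemma pd_sum {κ : Type*} (s : Finset κ) (c : κ → (ι → ℝ) → ℝ) (j : ι) (x : ι → ℝ)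
    (h : ∀ k ∈ s, DifferentiableAt ℝ (c k) x) :
    pd (fun y => ∑ k ∈ s, c k y) j x = ∑ k ∈ s, pd (c k) j x := by
  simp [pd, fderiv_fun_sum h]

lemma pd_mul (c d : (ι → ℝ) → ℝ) (j : ι) (x : ι → ℝ)
    (hc : DifferentiableAt ℝ c x) (hd : DifferentiableAt ℝ d x) :
    pd (fun y => c y * d y) j x = pd c j x * d x + c x * pd d j x := by
  simp only [pd, fderiv_fun_mul hc hd, ContinuousLinearMap.add_apply,
    ContinuousLinearMap.smul_apply, smul_eq_mul]
  ring

lemma contDiff_finset_prod {κ : Type*} (s : Finset κ) (c : κ → (ι → ℝ) → ℝ)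
    (h : ∀ k ∈ s, ContDiff ℝ (⊤ : ℕ∞) (c k)) :
    ContDiff ℝ (⊤ : ℕ∞) (fun y => ∏ k ∈ s, c k y) := by
  have he : (fun y => ∏ k ∈ s, c k y) = ∏ k ∈ s, c k := by
    funext y; simp [Finset.prod_apply]
  rw [he]
  exact Finset.prod_induction c (ContDiff ℝ (⊤ : ℕ∞)) (fun a b ha hb => ha.mul hb) contDiff_const h

lemma contDiff_det (N : (ι → ℝ) → Matrix ι ι ℝ)
    (h : ∀ i j, ContDiff ℝ (⊤ : ℕ∞) fun y => N y i j) :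
    ContDiff ℝ (⊤ : ℕ∞) fun y => (N y).det := by
  simp only [Matrix.det_apply']
  exact ContDiff.sum fun σ _ =>
    contDiff_const.mul (contDiff_finset_prod _ _ fun k _ => h (σ k) k)

lemma contDiff_inv_entry (M : (ι → ℝ) → Matrix ι ι ℝ)
    (hM : ∀ i j, ContDiff ℝ (⊤ : ℕ∞) fun y => M y i j)
    (hdet : ∀ y, (M y).det ≠ 0) (k m : ι) :
    ContDiff ℝ (⊤ : ℕ∞) fun y => (M y)⁻¹ k m := by
  have hadj : ContDiff ℝ (⊤ : ℕ∞) fun y => (M y).adjugate k m := by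
    simp only [Matrix.adjugate_apply]
    apply contDiff_det
    intro i j
    rcases eq_or_ne i m with rfl | hi
    · simp only [Matrix.updateRow_apply, if_pos rfl]
      exact contDiff_const
    · simp only [Matrix.updateRow_apply, if_neg hi]
      exact hM i j
  have he : (fun y => (M y)⁻¹ k m) = fun y => ((M y).det)⁻¹ * (M y).adjugate k m := by
    funext y
    rw [Matrix.inv_def, Matrix.smul_apply, Ring.inverse_eq_inv', smul_eq_mul]
  rw [he]
  exact ((contDiff_det M hM).inv hdet).mul hadj

end aux

/-- M (∂h/∂x) + (∂h/∂x)ᵀ M + Ṁ = -2H for the natural gradient field. -/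
theorem natGrad_jacobian_identity {n : ℕ}
    (M : (Fin n → ℝ) → Matrix (Fin n) (Fin n) ℝ)
    (f : (Fin n → ℝ) → ℝ → ℝ)
    (hMsmooth : ∀ i j, ContDiff ℝ (⊤ : ℕ∞) fun x => M x i j)
    (hMsymm : ∀ x, (M x).IsSymm)
    (hMpos : ∀ x, (M x).PosDef)
    (hf : ContDiff ℝ 2 (Function.uncurry f)) :
    ∀ (x : Fin n → ℝ) (t : ℝ),
      M x * jacobian (natGrad M f) x t + (jacobian (natGrad M f) x t)ᵀ * M x
        + mDot M (natGrad M f) x t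
      = (-2 : ℝ) • riemHess M (fun y => f y t) x := by
  intro x t
  -- notation
  set ft : (Fin n → ℝ) → ℝ := fun y => f y t with hft_def
  have hft : ContDiff ℝ 2 ft := hf.comp (contDiff_id.prodMk contDiff_const)
  -- smoothness of gradient components
  have hg : ∀ m : Fin n, ContDiff ℝ 1 fun y => pd ft m y := by
    intro m
    have h1 : ContDiff ℝ 1 (fderiv ℝ ft) := hft.fderiv_right (by norm_num)
    exact h1.clm_apply contDiff_const
  -- smoothness of inverse entries
  have hinv : ∀ k m : Fin n, ContDiff ℝ (⊤ : ℕ∞) fun y => (M y)⁻¹ k m :=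
    contDiff_inv_entry M hMsmooth (fun y => (hMpos y).det_pos.ne')
  -- natGrad as explicit sum
  have hnat : ∀ (y : Fin n → ℝ) (k : Fin n),
      natGrad M f y t k = -(∑ m, (M y)⁻¹ k m * pd ft m y) := by
    intro y k
    simp [natGrad, Matrix.mulVec, dotProduct, hft_def]
  -- differentiability of natGrad components
  have hdiffnat : ∀ k : Fin n, DifferentiableAt ℝ (fun y => natGrad M f y t k) x := by
    intro k
    have h1 : DifferentiableAt ℝ (fun y => ∑ m, (M y)⁻¹ k m * pd ft m y) x :=
      DifferentiableAt.fun_sum fun m _ =>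
        ((hinv k m).differentiable (by simp) x).mul ((hg m).differentiable (by simp) x)
    simpa only [hnat] using h1.fun_neg
  -- key pointwise identity: M · natGrad = -grad f
  have key : ∀ (a : Fin n) (y : Fin n → ℝ),
      (∑ k, M y a k * natGrad M f y t k) = -(pd ft a y) := by
    intro a y
    have hu : IsUnit (M y).det := isUnit_iff_ne_zero.mpr (hMpos y).det_pos.ne'
    have h1 : (M y).mulVec (natGrad M f y t) = -fun m => pd (fun z => f z t) m y := by
      rw [natGrad, Matrix.mulVec_neg, Matrix.mulVec_mulVec, Matrix.mul_nonsing_inv _ hu,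
        Matrix.one_mulVec]
    have h2 := congrFun h1 a
    simpa [Matrix.mulVec, dotProduct, hft_def] using h2
  -- symmetry of second derivatives
  have hsymm : ∀ a b : Fin n,
      pd (fun y => pd ft a y) b x = pd (fun y => pd ft b y) a x := by
    intro a b
    have hder : ∀ z, HasFDerivAt ft (fderiv ℝ ft z) z := fun z =>
      ((hft.differentiable (by norm_num)) z).hasFDerivAt
    have h1 : ContDiff ℝ 1 (fderiv ℝ ft) := hft.fderiv_right (by norm_num)
    have h2 : HasFDerivAt (fderiv ℝ ft) (fderiv ℝ (fderiv ℝ ft) x) x :=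
      (h1.differentiable (by simp) x).hasFDerivAt
    have hsec := second_derivative_symmetric hder h2
    have h4 : ∀ v : Fin n → ℝ, HasFDerivAt (fun y => fderiv ℝ ft y v)
        ((ContinuousLinearMap.apply ℝ ℝ v).comp (fderiv ℝ (fderiv ℝ ft) x)) x :=
      fun v => (ContinuousLinearMap.apply ℝ ℝ v).hasFDerivAt.comp x h2
    have h5 : ∀ v w : Fin n → ℝ, fderiv ℝ (fun y => fderiv ℝ ft y v) x w
        = fderiv ℝ (fderiv ℝ ft) x w v := by
      intro v w
      rw [(h4 v).fderiv]
      rfl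
    simp only [pd]
    rw [h5, h5, hsec]
  -- symmetry of inverse
  have hAsymm : ∀ k m : Fin n, (M x)⁻¹ k m = (M x)⁻¹ m k := by
    intro k m
    have h := Matrix.transpose_nonsing_inv (M x)
    rw [(hMsymm x).eq] at h
    have := congrFun (congrFun h m) k
    simpa [Matrix.transpose_apply] using this
  -- the "M times Jacobian" computation
  have MJ : ∀ a b : Fin n,
      (∑ k, M x a k * pd (fun y => natGrad M f y t k) b x)
      = -(pd (fun y => pd ft a y) b x)
        - ∑ k, pd (fun y => M y a k) b x * natGrad M f x t k := by
    intro a b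
    have hprod : ∀ k : Fin n, pd (fun y => M y a k * natGrad M f y t k) b x
        = pd (fun y => M y a k) b x * natGrad M f x t k
          + M x a k * pd (fun y => natGrad M f y t k) b x :=
      fun k => pd_mul _ _ _ _ ((hMsmooth a k).differentiable (by simp) x) (hdiffnat k)
    have hsum : pd (fun y => ∑ k, M y a k * natGrad M f y t k) b x
        = ∑ k, pd (fun y => M y a k * natGrad M f y t k) b x :=
      pd_sum _ _ _ _ fun k _ =>
        ((hMsmooth a k).differentiable (by simp) x).mul (hdiffnat k)
    have hkey : pd (fun y => ∑ k, M y a k * natGrad M f y t k) b x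
        = -(pd (fun y => pd ft a y) b x) := by
      have hfun : (fun y => ∑ k, M y a k * natGrad M f y t k)
          = fun y => -(pd ft a y) := funext fun y => key a y
      rw [hfun, pd_neg]
    have h6 : (∑ k, pd (fun y => M y a k) b x * natGrad M f x t k)
        + ∑ k, M x a k * pd (fun y => natGrad M f y t k) b x
        = -(pd (fun y => pd ft a y) b x) := by
      rw [← Finset.sum_add_distrib]
      rw [← Finset.sum_congr rfl fun k _ => hprod k]
      rw [← hsum]
      exact hkey
    linarith
  -- entrywise
  ext i j
  -- christoffel contraction
  have hchris : ∀ m : Fin n,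
      (∑ k, (M x)⁻¹ k m *
        (pd (fun y => M y i k) j x + pd (fun y => M y j k) i x
          - pd (fun y => M y i j) k x))
      = 2 * christoffel M m i j x := by
    intro m
    rw [christoffel, ← mul_assoc]
    norm_num
    exact Finset.sum_congr rfl fun k _ => by rw [hAsymm k m]
  -- main contraction identity
  have main : (∑ k, (pd (fun y => M y i k) j x + pd (fun y => M y j k) i x
        - pd (fun y => M y i j) k x) * natGrad M f x t k)
      = -(2 * ∑ m, christoffel M m i j x * pd ft m x) := by
    calc (∑ k, (pd (fun y => M y i k) j x + pd (fun y => M y j k) i x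
          - pd (fun y => M y i j) k x) * natGrad M f x t k)
        = ∑ k, ∑ m, -((M x)⁻¹ k m *
            (pd (fun y => M y i k) j x + pd (fun y => M y j k) i x
              - pd (fun y => M y i j) k x) * pd ft m x) := by
          refine Finset.sum_congr rfl fun k _ => ?_
          rw [hnat x k, mul_neg, Finset.mul_sum, ← Finset.sum_neg_distrib]
          exact Finset.sum_congr rfl fun m _ => by ring
      _ = ∑ m, -((∑ k, (M x)⁻¹ k m *
            (pd (fun y => M y i k) j x + pd (fun y => M y j k) i x
              - pd (fun y => M y i j) k x)) * pd ft m x) := by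
          rw [Finset.sum_comm]
          refine Finset.sum_congr rfl fun m _ => ?_
          rw [Finset.sum_neg_distrib, Finset.sum_mul]
      _ = -(2 * ∑ m, christoffel M m i j x * pd ft m x) := by
          rw [Finset.sum_neg_distrib, neg_inj, Finset.mul_sum]
          refine Finset.sum_congr rfl fun m _ => ?_
          rw [hchris m]
          ring
  -- split of the contraction sum
  have hsplit : (∑ k, (pd (fun y => M y i k) j x + pd (fun y => M y j k) i x
        - pd (fun y => M y i j) k x) * natGrad M f x t k)
      = (∑ k, pd (fun y => M y i k) j x * natGrad M f x t k)
        + (∑ k, pd (fun y => M y j k) i x * natGrad M f x t k)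
        - ∑ k, pd (fun y => M y i j) k x * natGrad M f x t k := by
    simp only [add_mul, sub_mul, Finset.sum_add_distrib, Finset.sum_sub_distrib]
  -- the transpose term
  have T2 : (∑ k, pd (fun y => natGrad M f y t k) i x * M x k j)
      = -(pd (fun y => pd ft j y) i x)
        - ∑ k, pd (fun y => M y j k) i x * natGrad M f x t k := by
    have : (∑ k, pd (fun y => natGrad M f y t k) i x * M x k j)
        = ∑ k, M x j k * pd (fun y => natGrad M f y t k) i x := by
      refine Finset.sum_congr rfl fun k _ => ?_
      rw [(hMsymm x).apply k j]
      ring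
    rw [this, MJ j i]
  have T1 : (∑ k, M x i k * pd (fun y => natGrad M f y t k) j x)
      = -(pd (fun y => pd ft j y) i x)
        - ∑ k, pd (fun y => M y i k) j x * natGrad M f x t k := by
    rw [MJ i j, hsymm i j]
  -- assemble
  simp only [Matrix.add_apply, Matrix.mul_apply, Matrix.transpose_apply, jacobian, mDot,
    riemHess, Matrix.of_apply, Matrix.smul_apply, smul_eq_mul]
  rw [T1, T2]
  linarith [main, hsplit]
end

section
/- Let X : ℝ → Sym⁺(n) solve Ẋ = -X + A with A positive definite, and let δX(t) solve the linearized equation δẊ = -δX (i.e., δX(t) = e^{-t}δX(0)). Then with δZ = X^{-1/2} δX X^{-1/2}, one has tr((X⁻¹δX)²) = tr(δZ²) and d/dt tr((X⁻¹δX)²) = -2 tr(δZ X^{-1/2} A X^{-1/2} δZ) < 0 whenever δX ≠ 0. -/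
/-!
With `B = X⁻¹`, `S * S = B` and `Z = S δX S`, cyclicity of the trace turns `tr((B δX)²)`
into `tr(Z²)` and `tr(Z (S A S) Z)` into `tr(B A B δX B δX)`. Along the flow the `-X` part
of `Ẋ` exactly cancels the decay `δẊ = -δX`, so `d/dt (X⁻¹ δX) = -B A B δX`, and
differentiating the square gives `-2 tr(Z (S A S) Z)`. Finally `Z` is symmetric and nonzero
and `S A S` is positive definite, so `tr(Z (S A S) Z) = tr(Zᴴ (S A S) Z) > 0`.
-/

open Matrix

attribute [local instance] Matrix.frobeniusNormedAddCommGroup Matrix.frobeniusNormedSpace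

attribute [local instance] Matrix.frobeniusNormedRing Matrix.frobeniusNormedAlgebra

section Derivatives

variable {𝕜 : Type*} [RCLike 𝕜] {m : Type*} [Fintype m]
  {F : 𝕜 → Matrix m m 𝕜} {F' : Matrix m m 𝕜} {t : 𝕜}

theorem HasDerivAt.matrix_trace (hF : HasDerivAt F F' t) :
    HasDerivAt (fun τ => (F τ).trace) F'.trace t :=
  (traceLinearMap m 𝕜 𝕜).toContinuousLinearMap.hasFDerivAt.comp_hasDerivAt t hF

variable [DecidableEq m]

theorem HasDerivAt.matrix_inv (hF : HasDerivAt F F' t) (ht : IsUnit (F t)) :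
    HasDerivAt (fun τ => (F τ)⁻¹) (-((F t)⁻¹ * F' * (F t)⁻¹)) t := by
  obtain ⟨u, hu⟩ := ht
  have h := (hu ▸ hasFDerivAt_ringInverse (𝕜 := 𝕜) u).comp_hasDerivAt t hF
  simp only [Function.comp_def, ← nonsing_inv_eq_ringInverse, ← hu, ← coe_units_inv] at h ⊢
  exact h

theorem HasDerivAt.matrix_trace_sq (hF : HasDerivAt F F' t) :
    HasDerivAt (fun τ => ((F τ) ^ 2).trace) (2 * (F' * F t).trace) t := by
  have h := (hF.mul hF).matrix_trace
  simp only [Pi.mul_apply, ← sq] at h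
  convert h using 1
  rw [trace_add, trace_mul_comm (F t)]
  ring

theorem hasDerivAt_inv_mul_of_flow {A : Matrix m m 𝕜} {X δX : 𝕜 → Matrix m m 𝕜}
    (hX : IsUnit (X t)) (hXflow : HasDerivAt X (-(X t) + A) t)
    (hδXflow : HasDerivAt δX (-(δX t)) t) :
    HasDerivAt (fun τ => (X τ)⁻¹ * δX τ) (-((X t)⁻¹ * A * (X t)⁻¹ * δX t)) t := by
  have hXinv : (X t)⁻¹ * X t = 1 := nonsing_inv_mul _ ((isUnit_iff_isUnit_det _).mp hX)
  refine ((hXflow.matrix_inv hX).mul hδXflow).congr_deriv ?_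
  simp only [mul_add, add_mul, mul_neg, neg_mul, hXinv, one_mul]
  abel

end Derivatives

theorem Matrix.trace_conj_mul_conj {R : Type*} [CommSemiring R] {m : Type*} [Fintype m]
    {S B : Matrix m m R} (hS : S * S = B) (M N : Matrix m m R) :
    (S * M * S * (S * N * S)).trace = (B * M * B * N).trace :=
  calc (S * M * S * (S * N * S)).trace = (S * (M * B * N * S)).trace := by
        simp only [← hS, mul_assoc]
    _ = (M * B * N * (S * S)).trace := by rw [trace_mul_comm, mul_assoc]
    _ = (B * M * B * N).trace := by rw [hS, trace_mul_comm, ← mul_assoc, ← mul_assoc]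

open scoped ComplexOrder in
theorem Matrix.PosDef.trace_conjTranspose_mul_mul_pos {𝕜 : Type*} [RCLike 𝕜]
    {m n : Type*} [Fintype m] [Fintype n] {P : Matrix n n 𝕜} (hP : P.PosDef)
    {M : Matrix n m 𝕜} (hM : M ≠ 0) : 0 < (Mᴴ * P * M).trace := by
  have hpsd := hP.posSemidef.conjTranspose_mul_mul_same M
  refine hpsd.trace_nonneg.lt_of_ne' fun htr => hM (ext_iff_mulVec.mpr fun v => ?_)
  rw [hpsd.trace_eq_zero_iff] at htr
  by_contra hv
  have := hP.dotProduct_mulVec_pos (x := M *ᵥ v) (by simpa using hv)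
  rw [star_mulVec, ← dotProduct_mulVec, mulVec_mulVec, mulVec_mulVec, htr] at this
  simp at this

/-- Along the flow Ẋ = -X + A with linearization δẊ = -δX, setting
δZ = X^{-1/2} δX X^{-1/2} (S t denotes the positive definite square root of
X(t)⁻¹), one has tr((X⁻¹δX)²) = tr(δZ²) and
d/dt tr((X⁻¹δX)²) = -2 tr(δZ X^{-1/2} A X^{-1/2} δZ) < 0 whenever δX ≠ 0. -/
theorem logdet_flow_differential_contraction
    {n : ℕ} (A : Matrix (Fin n) (Fin n) ℝ) (hA : A.PosDef)
    (X δX S : ℝ → Matrix (Fin n) (Fin n) ℝ)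
    (hXpos : ∀ t, (X t).PosDef)
    (hXflow : ∀ t, HasDerivAt X (-(X t) + A) t)
    (hδXsymm : ∀ t, (δX t).IsSymm)
    (hδXflow : ∀ t, HasDerivAt δX (-(δX t)) t)
    (hSpos : ∀ t, (S t).PosDef)
    (hSsq : ∀ t, S t * S t = (X t)⁻¹) :
    ∀ t : ℝ,
      ((((X t)⁻¹ * δX t) ^ 2).trace = ((S t * δX t * S t) ^ 2).trace) ∧
      HasDerivAt (fun τ => (((X τ)⁻¹ * δX τ) ^ 2).trace)
        (-2 * ((S t * δX t * S t) * (S t * A * S t) * (S t * δX t * S t)).trace) t ∧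
      (δX t ≠ 0 →
        -2 * ((S t * δX t * S t) * (S t * A * S t) * (S t * δX t * S t)).trace < 0) := by
  intro t
  set B := (X t)⁻¹
  set D := δX t
  set Z := S t * D * S t
  have hS : (S t)ᴴ = S t := (hSpos t).isHermitian
  have hD : Dᴴ = D := by rw [conjTranspose_eq_transpose_of_trivial]; exact (hδXsymm t).eq
  have hZCZ : (Z * (S t * A * S t) * Z).trace = (B * A * B * D * (B * D)).trace :=
    calc (Z * (S t * A * S t) * Z).trace = (S t * D * S t * (S t * (A * B * D) * S t)).trace := by
          simp only [Z, B, ← hSsq t, Matrix.mul_assoc]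
      _ = (B * D * B * (A * B * D)).trace := trace_conj_mul_conj (hSsq t) _ _
      _ = (B * A * B * D * (B * D)).trace := by
          rw [← trace_mul_comm (B * D)]; simp only [Matrix.mul_assoc]
  refine ⟨?_, ?_, fun hD0 => ?_⟩
  · rw [sq, sq, trace_conj_mul_conj (hSsq t)]
    simp only [B, Matrix.mul_assoc]
  · refine (hasDerivAt_inv_mul_of_flow (hXpos t).isUnit (hXflow t) (hδXflow t)).matrix_trace_sq
      |>.congr_deriv ?_
    rw [hZCZ, neg_mul, trace_neg]
    ring
  · have hSu : IsUnit (S t) := (hSpos t).isUnit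
    have hC : (S t * A * S t).PosDef := by
      simpa only [hS] using hA.conjTranspose_mul_mul_same (mulVec_injective_of_isUnit hSu)
    have hZ0 : S t * D * S t ≠ 0 := by
      rwa [Ne, hSu.mul_left_eq_zero, hSu.mul_right_eq_zero]
    have hZ : Zᴴ = Z := by simp only [Z, conjTranspose_mul, hS, hD, Matrix.mul_assoc]
    have hpos := hC.trace_conjTranspose_mul_mul_pos hZ0
    rw [hZ] at hpos
    linarith
end
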